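/- arXiv:2206.12635 — 2 statements merged into one kernel-verified Lean document; each statement's English description precedes it below -/
import Mathlib

section
/- Let a ≥ b ≥ 1 be integers and set k = a² + ab + b². Take r = 1/2 (regular hexagons of unit diameter) and let Λ be the subgroup of ℤ² generated by (a, b) and (−b, a + b), which has index k in ℤ² (and whose corresponding set of tile centers is again a triangular lattice). Then the separation of the induced k-colouring equals √((3a + 3b − 4)² + 3(a − b)²) / 4. -/
noncomputable section

/-- The Euclidean plane ℝ². -/
abbrev Plane := EuclideanSpace ℝ (Fin 2)

/-- The point (a, b) of the Euclidean plane. -/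
def pt (a b : ℝ) : Plane := WithLp.toLp 2 ![a, b]

/-- The semi-regular hexagon K(r): with y = r/2 and x = √(1 − r²)/2, the closed convex
hull of the six points (0, 1/2), (x, y), (x, −y), (0, −1/2), (−x, −y), (−x, y). -/
def hexK (r : ℝ) : Set Plane :=
  convexHull ℝ
    {pt 0 (1 / 2), pt (Real.sqrt (1 - r ^ 2) / 2) (r / 2),
      pt (Real.sqrt (1 - r ^ 2) / 2) (-(r / 2)), pt 0 (-(1 / 2)),
      pt (-(Real.sqrt (1 - r ^ 2) / 2)) (-(r / 2)),
      pt (-(Real.sqrt (1 - r ^ 2) / 2)) (r / 2)}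

/-- The center c(i, j) = ((2i + j)·x, j·(y + 1/2)) of the tile with index (i, j). -/
def center (r : ℝ) (i j : ℤ) : Plane :=
  pt ((2 * (i : ℝ) + (j : ℝ)) * (Real.sqrt (1 - r ^ 2) / 2)) ((j : ℝ) * (r / 2 + 1 / 2))

/-- The tile T(i, j) = c(i, j) + K(r). -/
def tile (r : ℝ) (i j : ℤ) : Set Plane :=
  (fun p => center r i j + p) '' hexK r

/-- The set of distances realized by points in two distinct same-coloured tiles,
for the colouring of the tiles T(i, j) by the cosets of a subgroup Λ ≤ ℤ²:
tiles T(i, j) and T(i', j') get the same colour iff (i − i', j − j') ∈ Λ.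
The separation of the colouring is the infimum of this set. -/
def sameColourDists (r : ℝ) (Λ : AddSubgroup (ℤ × ℤ)) : Set ℝ :=
  {d : ℝ | ∃ (i j i' j' : ℤ) (p q : Plane),
    (i, j) ≠ (i', j') ∧ (i - i', j - j') ∈ Λ ∧
    p ∈ tile r i j ∧ q ∈ tile r i' j' ∧ d = dist p q}


/-!
Identify `ℤ²` with the Eisenstein integers via `(u, v) ↦ u + vω`, `ω = e^{iπ/3}`: then `Λ` is the
principal ideal generated by `π = a + bω`, of index `det = N(π) = a² + ab + b²`, and the tile
centers realise `ℤ[ω]` as a triangular lattice in which `|c(π)|² = 3 N(π) / 4`.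

Points of two same-coloured tiles differ by `c(λ) + p - q` with `0 ≠ λ ∈ Λ` and `p, q ∈ K`, i.e.
by a point of `c(λ) + 2K`. If `λ = ±π, ±ωπ, ±ω²π`, the vertex `2u₀` of `2K` nearest to `c(λ)`
has the property that `u₀` maximises `|⟪c(λ) - 2u₀, ·⟫|` on `K`, so the distance from `c(λ)` to
`2K` is `|c(λ) - 2u₀|`, which is the claimed separation in all six cases. Every other `λ` has
`N(λ) ≥ 3 N(π)`, and then the crude bound `|c(λ)| - 1` already suffices. The separation is
attained between the bottom vertex of `T(-b, a + b)` and the top vertex of `T(0, 0)`.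
-/

open Real RealInnerProductSpace

theorem AddSubgroup.index_closure_pair_eq_natAbs (u v : ℤ × ℤ) (h : u.1 * v.2 - u.2 * v.1 ≠ 0) :
    (AddSubgroup.closure {u, v}).index = (u.1 * v.2 - u.2 * v.1).natAbs := by
  have hli : LinearIndependent ℤ ![u, v] := by
    refine LinearIndependent.pair_iff.mpr fun s t hst => ?_
    simp only [Prod.ext_iff, Prod.fst_add, Prod.snd_add, smul_eq_mul, Prod.smul_fst,
      Prod.smul_snd, Prod.fst_zero, Prod.snd_zero] at hst
    have hs : s * (u.1 * v.2 - u.2 * v.1) = 0 := by linear_combination v.2 * hst.1 - v.1 * hst.2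
    have ht : t * (u.1 * v.2 - u.2 * v.1) = 0 := by linear_combination u.1 * hst.2 - u.2 * hst.1
    exact ⟨(mul_eq_zero.mp hs).resolve_right h, (mul_eq_zero.mp ht).resolve_right h⟩
  have hspan : (Submodule.span ℤ (Set.range ![u, v])).toAddSubgroup =
      AddSubgroup.closure {u, v} := by
    rw [Submodule.span_int_eq_addSubgroupClosure, Matrix.range_cons_cons_empty]
  rw [← hspan, AddSubgroup.index_eq_natAbs_det (Module.Basis.finTwoProd ℤ) _
    ((Module.Basis.span hli).map (LinearEquiv.ofEq _ _ (by simp)))]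
  simp [Module.Basis.det_apply, Matrix.det_fin_two, Module.Basis.toMatrix_apply, mul_comm v.1]

theorem norm_le_norm_add_two_smul_add_sub {E : Type*} [NormedAddCommGroup E]
    [InnerProductSpace ℝ E] {S : Set E} {n u₀ p q : E} {c : ℝ} (hS : ∀ u ∈ S, |⟪n, u⟫| ≤ c)
    (hc : c ≤ ⟪n, u₀⟫) (hp : p ∈ convexHull ℝ S) (hq : q ∈ convexHull ℝ S) :
    ‖n‖ ≤ ‖n + 2 • u₀ + p - q‖ := by
  have hconv : Convex ℝ {x | |⟪n, x⟫| ≤ c} := by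
    simp only [abs_le, Set.ofPred_and]
    exact (convex_halfSpace_ge (innerₛₗ ℝ n).isLinear _).inter
      (convex_halfSpace_le (innerₛₗ ℝ n).isLinear _)
  have hhull : convexHull ℝ S ⊆ {x | |⟪n, x⟫| ≤ c} := convexHull_min hS hconv
  have hp' : |⟪n, p⟫| ≤ c := hhull hp
  have hq' : |⟪n, q⟫| ≤ c := hhull hq
  have hinner : 0 ≤ ⟪n, 2 • u₀ + p - q⟫ := by
    rw [two_smul, inner_sub_right, inner_add_right, inner_add_right]
    linarith [(abs_le.mp hp').1, (abs_le.mp hq').2]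
  rw [add_assoc, add_sub_assoc]
  refine le_of_pow_le_pow_left₀ two_ne_zero (norm_nonneg _) ?_
  rw [norm_add_sq_real]
  nlinarith [sq_nonneg ‖2 • u₀ + (p - q)‖]

theorem pt_add (x y x' y' : ℝ) : pt x y + pt x' y' = pt (x + x') (y + y') := by
  ext i; fin_cases i <;> simp [pt]

theorem pt_sub (x y x' y' : ℝ) : pt x y - pt x' y' = pt (x - x') (y - y') := by
  ext i; fin_cases i <;> simp [pt]

theorem inner_pt (x y x' y' : ℝ) : ⟪pt x y, pt x' y'⟫ = x * x' + y * y' := by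
  simp [pt, PiLp.inner_apply, Fin.sum_univ_two, mul_comm]

theorem inner_pt_mul_sqrt_three (x y x' y' : ℝ) :
    ⟪pt (x * √3) y, pt (x' * √3) y'⟫ = 3 * x * x' + y * y' := by
  rw [inner_pt]; linear_combination x * x' * mul_self_sqrt (show (0 : ℝ) ≤ 3 by norm_num)

theorem norm_pt (x y : ℝ) : ‖pt x y‖ = √(x ^ 2 + y ^ 2) := by
  simp [EuclideanSpace.norm_eq, Fin.sum_univ_two, pt]

theorem center_sub_center (r : ℝ) (i j i' j' : ℤ) :
    center r i j - center r i' j' = center r (i - i') (j - j') := by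
  ext k; fin_cases k <;> simp [center, pt] <;> ring

theorem center_neg (r : ℝ) (m n : ℤ) : center r (-m) (-n) = -center r m n := by
  ext k; fin_cases k <;> simp [center, pt]; ring

theorem sqrt_one_sub_half_sq : √(1 - (1 / 2 : ℝ) ^ 2) = √3 / 2 := by
  rw [show (1 : ℝ) - (1 / 2) ^ 2 = 3 / 2 ^ 2 by norm_num, sqrt_div' _ (by norm_num),
    sqrt_sq (by norm_num)]

theorem center_half (m n : ℤ) :
    center (1 / 2) m n = pt ((2 * m + n) / 4 * √3) (3 * n / 4) := by
  rw [center, sqrt_one_sub_half_sq]; congr 1 <;> ring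

theorem norm_center_half_sq (m n : ℤ) :
    ‖center (1 / 2) m n‖ ^ 2 = 3 / 4 * (m ^ 2 + m * n + n ^ 2) := by
  rw [center_half, norm_pt, sq_sqrt (by positivity)]
  linear_combination ((2 * m + n : ℝ) / 4) ^ 2 * sq_sqrt (show (0 : ℝ) ≤ 3 by norm_num)

def hexVertices : Set Plane :=
  {pt 0 (1 / 2), pt (1 / 4 * √3) (1 / 4), pt (1 / 4 * √3) (-(1 / 4)), pt 0 (-(1 / 2)),
    pt (-(1 / 4) * √3) (-(1 / 4)), pt (-(1 / 4) * √3) (1 / 4)}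

theorem hexK_half : hexK (1 / 2) = convexHull ℝ hexVertices := by
  rw [hexK, sqrt_one_sub_half_sq, hexVertices, neg_mul, show √3 / 2 / 2 = 1 / 4 * √3 by ring,
    show (1 / 2 : ℝ) / 2 = 1 / 4 by norm_num]

theorem norm_le_half_of_mem_hexK_half {p : Plane} (hp : p ∈ hexK (1 / 2)) : ‖p‖ ≤ 1 / 2 := by
  rw [hexK_half] at hp
  refine mem_closedBall_zero_iff.mp (convexHull_min ?_ (convex_closedBall 0 (1 / 2)) hp)
  rintro u (rfl | rfl | rfl | rfl | rfl | rfl) <;>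
    rw [mem_closedBall_zero_iff, norm_pt, sqrt_le_left (by norm_num)] <;>
    linarith [sq_sqrt (show (0 : ℝ) ≤ 3 by norm_num)]

theorem abs_inner_le_of_mem_hexVertices {x y c : ℝ} (h₁ : |y / 2| ≤ c)
    (h₂ : |3 * x / 4 + y / 4| ≤ c) (h₃ : |3 * x / 4 - y / 4| ≤ c) :
    ∀ u ∈ hexVertices, |⟪pt (x * √3) y, u⟫| ≤ c := by
  rw [abs_le] at h₁ h₂ h₃
  rintro u (rfl | rfl | rfl | rfl | rfl | rfl) <;>
    first | rw [inner_pt_mul_sqrt_three] | rw [inner_pt]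
  all_goals rw [abs_le]; constructor <;> linarith

def hexSeparation (a b : ℝ) : ℝ := √((3 * a + 3 * b - 4) ^ 2 + 3 * (a - b) ^ 2) / 4

theorem norm_pt_mul_sqrt_three_eq_hexSeparation {a b x y : ℝ}
    (h : 16 * (3 * x ^ 2 + y ^ 2) = (3 * a + 3 * b - 4) ^ 2 + 3 * (a - b) ^ 2) :
    ‖pt (x * √3) y‖ = hexSeparation a b := by
  rw [norm_pt, hexSeparation, ← h, sqrt_mul' _ (by positivity), show (16 : ℝ) = 4 ^ 2 by norm_num,
    sqrt_sq (by norm_num), mul_pow, sq_sqrt (by norm_num)]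
  ring_nf

theorem hexSeparation_le_of_vertex {a b x y x₀ y₀ c : ℝ} {w p q : Plane}
    (hw : w = pt (x * √3) y + 2 • pt (x₀ * √3) y₀) (hc : c ≤ 3 * x * x₀ + y * y₀)
    (h₁ : |y / 2| ≤ c) (h₂ : |3 * x / 4 + y / 4| ≤ c) (h₃ : |3 * x / 4 - y / 4| ≤ c)
    (hxy : 16 * (3 * x ^ 2 + y ^ 2) = (3 * a + 3 * b - 4) ^ 2 + 3 * (a - b) ^ 2)
    (hp : p ∈ hexK (1 / 2)) (hq : q ∈ hexK (1 / 2)) :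
    hexSeparation a b ≤ ‖w + p - q‖ := by
  rw [← inner_pt_mul_sqrt_three] at hc
  rw [← norm_pt_mul_sqrt_three_eq_hexSeparation hxy, hw]
  rw [hexK_half] at hp hq
  exact norm_le_norm_add_two_smul_add_sub (abs_inner_le_of_mem_hexVertices h₁ h₂ h₃) hc hp hq

/-- In the coordinates `(u, v) ↦ u + vω` of `ℤ[ω]`, the units `1, ω, ω²`; up to sign these are
all the units. -/
def eisensteinUnitReps : Set (ℤ × ℤ) := {(1, 0), (0, 1), (-1, 1)}

theorem mem_eisensteinUnitReps_or_neg_mem {u v : ℤ} (h0 : (u, v) ≠ 0)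
    (h : u ^ 2 + u * v + v ^ 2 < 3) :
    (u, v) ∈ eisensteinUnitReps ∨ (-u, -v) ∈ eisensteinUnitReps := by
  have hv : v ^ 2 ≤ 2 := by nlinarith [sq_nonneg (2 * u + v)]
  have hu : u ^ 2 ≤ 2 := by nlinarith [sq_nonneg (u + 2 * v)]
  obtain ⟨hu₁, hu₂⟩ : -1 ≤ u ∧ u ≤ 1 := by constructor <;> nlinarith
  obtain ⟨hv₁, hv₂⟩ : -1 ≤ v ∧ v ≤ 1 := by constructor <;> nlinarith
  interval_cases u <;> interval_cases v <;> simp_all [eisensteinUnitReps]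

variable {a b : ℤ}

theorem hexSeparation_le_of_mem_eisensteinUnitReps (hb : 1 ≤ b) (hab : b ≤ a) {u v : ℤ}
    (huv : (u, v) ∈ eisensteinUnitReps) {p q : Plane}
    (hp : p ∈ hexK (1 / 2)) (hq : q ∈ hexK (1 / 2)) :
    hexSeparation a b ≤ ‖center (1 / 2) (u * a - v * b) (u * b + v * (a + b)) + p - q‖ := by
  have ha' : (1 : ℝ) ≤ a := by exact_mod_cast hb.trans hab
  have hb' : (1 : ℝ) ≤ b := by exact_mod_cast hb
  simp only [eisensteinUnitReps, Set.mem_insert_iff, Set.mem_singleton_iff,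
    Prod.mk.injEq] at huv
  -- `2 • pt (x₀ * √3) y₀` is the vertex of `K - K = 2K` nearest to the lattice vector
  rcases huv with ⟨rfl, rfl⟩ | ⟨rfl, rfl⟩ | ⟨rfl, rfl⟩
  · refine hexSeparation_le_of_vertex (x := (2 * a + b - 2) / 4) (y := (3 * b - 2) / 4)
      (x₀ := 1 / 4) (y₀ := 1 / 4) (c := (3 * a + 3 * b - 4) / 8) ?_ ?_ ?_ ?_ ?_ (by ring) hp hq
    · rw [center_half, two_smul, pt_add, pt_add]; push_cast; congr 1 <;> ring
    · linarith
    all_goals rw [abs_le]; constructor <;> linarith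
  · refine hexSeparation_le_of_vertex (x := (a - b) / 4) (y := (3 * a + 3 * b - 4) / 4)
      (x₀ := 0) (y₀ := 1 / 2) (c := (3 * a + 3 * b - 4) / 8) ?_ ?_ ?_ ?_ ?_ (by ring) hp hq
    · rw [center_half, two_smul, pt_add, pt_add]; push_cast; congr 1 <;> ring
    · linarith
    all_goals rw [abs_le]; constructor <;> linarith
  · refine hexSeparation_le_of_vertex (x := -(a + 2 * b - 2) / 4) (y := (3 * a - 2) / 4)
      (x₀ := -(1 / 4)) (y₀ := 1 / 4) (c := (3 * a + 3 * b - 4) / 8) ?_ ?_ ?_ ?_ ?_ (by ring) hp hq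
    · rw [center_half, two_smul, pt_add, pt_add]; push_cast; congr 1 <;> ring
    · linarith
    all_goals rw [abs_le]; constructor <;> linarith

theorem hexSeparation_add_one_sq_le (hb : 1 ≤ b) (hab : b ≤ a) :
    (hexSeparation a b + 1) ^ 2 ≤ 9 / 4 * (a ^ 2 + a * b + b ^ 2) := by
  have ha' : (1 : ℝ) ≤ a := by exact_mod_cast hb.trans hab
  have hb' : (1 : ℝ) ≤ b := by exact_mod_cast hb
  have hd₀ : 0 ≤ hexSeparation a b := by unfold hexSeparation; positivity
  have hd₂ : 16 * hexSeparation a b ^ 2 = (3 * a + 3 * b - 4) ^ 2 + 3 * (a - b) ^ 2 := by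
    rw [hexSeparation, div_pow, sq_sqrt (by positivity)]; ring
  nlinarith

theorem hexSeparation_le_of_three_le (hb : 1 ≤ b) (hab : b ≤ a) {u v : ℤ}
    (huv : 3 ≤ u ^ 2 + u * v + v ^ 2) {p q : Plane}
    (hp : p ∈ hexK (1 / 2)) (hq : q ∈ hexK (1 / 2)) :
    hexSeparation a b ≤ ‖center (1 / 2) (u * a - v * b) (u * b + v * (a + b)) + p - q‖ := by
  set w := center (1 / 2) (u * a - v * b) (u * b + v * (a + b))
  have hk : (3 : ℝ) ≤ a ^ 2 + a * b + b ^ 2 := by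
    exact_mod_cast (by nlinarith : 3 ≤ a ^ 2 + a * b + b ^ 2)
  have huv' : (3 : ℝ) ≤ u ^ 2 + u * v + v ^ 2 := by exact_mod_cast huv
  have hw : (hexSeparation a b + 1) ^ 2 ≤ ‖w‖ ^ 2 := by
    have : ‖w‖ ^ 2 = 3 / 4 * ((a ^ 2 + a * b + b ^ 2) * (u ^ 2 + u * v + v ^ 2)) := by
      rw [norm_center_half_sq]; push_cast; ring
    nlinarith [hexSeparation_add_one_sq_le hb hab]
  have hwpq : ‖w‖ ≤ ‖w + p - q‖ + ‖p‖ + ‖q‖ :=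
    calc ‖w‖ = ‖w + p - q - p + q‖ := by abel_nf
      _ ≤ ‖w + p - q‖ + ‖p‖ + ‖q‖ := (norm_add_le _ _).trans (by gcongr; exact norm_sub_le _ _)
  linarith [le_of_pow_le_pow_left₀ two_ne_zero (norm_nonneg w) hw,
    norm_le_half_of_mem_hexK_half hp, norm_le_half_of_mem_hexK_half hq]

theorem hexSeparation_le_of_ne_zero (hb : 1 ≤ b) (hab : b ≤ a) {u v : ℤ} (h0 : (u, v) ≠ 0)
    {p q : Plane} (hp : p ∈ hexK (1 / 2)) (hq : q ∈ hexK (1 / 2)) :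
    hexSeparation a b ≤ ‖center (1 / 2) (u * a - v * b) (u * b + v * (a + b)) + p - q‖ := by
  rcases le_or_gt 3 (u ^ 2 + u * v + v ^ 2) with hN | hN
  · exact hexSeparation_le_of_three_le hb hab hN hp hq
  rcases mem_eisensteinUnitReps_or_neg_mem h0 hN with h | h
  · exact hexSeparation_le_of_mem_eisensteinUnitReps hb hab h hp hq
  · have hneg : center (1 / 2) (-u * a - -v * b) (-u * b + -v * (a + b)) =
        -center (1 / 2) (u * a - v * b) (u * b + v * (a + b)) := by
      rw [← center_neg]
      exact congrArg₂ _ (by ring) (by ring)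
    rw [← norm_neg, show -(center (1 / 2) (u * a - v * b) (u * b + v * (a + b)) + p - q) =
      center (1 / 2) (-u * a - -v * b) (-u * b + -v * (a + b)) + q - p by rw [hneg]; abel]
    exact hexSeparation_le_of_mem_eisensteinUnitReps hb hab h hq hp

theorem hexSeparation_le_of_mem_closure (hb : 1 ≤ b) (hab : b ≤ a) {m n : ℤ}
    (hmn : (m, n) ∈ AddSubgroup.closure {(a, b), (-b, a + b)}) (h0 : (m, n) ≠ 0)
    {p q : Plane} (hp : p ∈ hexK (1 / 2)) (hq : q ∈ hexK (1 / 2)) :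
    hexSeparation a b ≤ ‖center (1 / 2) m n + p - q‖ := by
  obtain ⟨u, v, huv⟩ := AddSubgroup.mem_closure_pair.mp hmn
  simp only [Prod.ext_iff, Prod.fst_add, Prod.snd_add, Prod.smul_fst, Prod.smul_snd,
    smul_eq_mul] at huv
  obtain ⟨rfl, rfl⟩ := huv
  refine (hexSeparation_le_of_ne_zero hb hab (u := u) (v := v) ?_ hp hq).trans_eq ?_
  · rintro ⟨⟩
    exact h0 (by simp)
  · rw [mul_neg, ← sub_eq_add_neg]

theorem hexSeparation_mem_sameColourDists (hb : 1 ≤ b) :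
    hexSeparation a b ∈ sameColourDists (1 / 2) (AddSubgroup.closure {(a, b), (-b, a + b)}) := by
  refine ⟨-b, a + b, 0, 0, center (1 / 2) (-b) (a + b) + pt 0 (-(1 / 2)),
    center (1 / 2) 0 0 + pt 0 (1 / 2), ?_, ?_, ⟨_, ?_, rfl⟩, ⟨_, ?_, rfl⟩, ?_⟩
  · simp only [ne_eq, Prod.mk.injEq, not_and]; omega
  · rw [sub_zero, sub_zero]; exact AddSubgroup.subset_closure (Set.mem_insert_of_mem _ rfl)
  · rw [hexK_half]; exact subset_convexHull ℝ _ (by simp [hexVertices])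
  · rw [hexK_half]; exact subset_convexHull ℝ _ (by simp [hexVertices])
  · rw [dist_eq_norm, ← norm_pt_mul_sqrt_three_eq_hexSeparation
      (x := (a - b) / 4) (y := (3 * a + 3 * b - 4) / 4) (by ring),
      center_half, center_half, pt_add, pt_add, pt_sub]
    push_cast
    congr 2 <;> ring

/-- for integers a ≥ b ≥ 1 and k = a² + ab + b², with r = 1/2 (regular
hexagons of unit diameter) and Λ = ⟨(a, b), (−b, a + b)⟩ ≤ ℤ² of index k, the separation
of the induced k-colouring equals √((3a + 3b − 4)² + 3(a − b)²) / 4. -/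
theorem statement7 (a b : ℤ) (hb : 1 ≤ b) (hab : b ≤ a) :
    ((AddSubgroup.closure {((a : ℤ), b), (-b, a + b)} : AddSubgroup (ℤ × ℤ)).index : ℤ) =
      a ^ 2 + a * b + b ^ 2 ∧
    IsGLB
      (sameColourDists (1 / 2) (AddSubgroup.closure {((a : ℤ), b), (-b, a + b)}))
      (Real.sqrt ((3 * (a : ℝ) + 3 * (b : ℝ) - 4) ^ 2 + 3 * ((a : ℝ) - (b : ℝ)) ^ 2) / 4) := by
  have hdet : a * (a + b) - b * -b = a ^ 2 + a * b + b ^ 2 := by ring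
  have hk : 0 < a ^ 2 + a * b + b ^ 2 := by nlinarith
  refine ⟨?_, IsLeast.isGLB ⟨hexSeparation_mem_sameColourDists hb, ?_⟩⟩
  · rw [AddSubgroup.index_closure_pair_eq_natAbs _ _ (by rw [hdet]; exact hk.ne'), hdet]
    exact Int.natAbs_of_nonneg hk.le
  · rintro _ ⟨i, j, i', j', _, _, hne, hmem, ⟨p, hp, rfl⟩, ⟨q, hq, rfl⟩, rfl⟩
    rw [dist_eq_norm, add_sub_add_comm, center_sub_center, ← add_sub_assoc]
    refine hexSeparation_le_of_mem_closure hb hab hmem ?_ hp hq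
    simpa [sub_eq_zero] using hne
end
end

section
/- There exist a closed convex pentagon P ⊂ ℝ² of Euclidean diameter at most 1, a countable family of isometric copies of P whose union is all of ℝ² and whose interiors are pairwise disjoint (a tiling of the plane by congruent tiles), and a colouring of these tiles with 6 colours, such that any two distinct tiles of the same colour are at Euclidean distance at least √(55/56) from each other (i.e. dist(p, q) ≥ √(55/56) for all points p, q in the two tiles). -/
noncomputable section

/-!
In the coordinates `lat x y = (x √(55/896), y √(1/896))` one has
`‖lat x y‖² = (55 x² + y²) / 896`. The pentagon is the house with corners `(0,0)`, `(2,0)`,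
`(2,26)`, `(1,29)`, `(0,26)`; its longest chords, from a bottom corner to the apex or to the
opposite top corner of the wall, have length exactly `1`. Houses standing side by side, together
with the half-turned houses filling the gaps between their roofs, form a strip of height `55`;
shifting successive strips by `3` tiles the plane with period lattice spanned by `(2,0)` and
`(3,55)`. A tile is coloured by its orientation and the residue mod `3` of its index in the row.
Two tiles of the same colour are separated by a horizontal or vertical line or by a line parallel
to a roof edge, and in every case the gap is at least `√(55/56)` wide.
-/

open RealInnerProductSpace Pointwise

section Separation

variable {E : Type*} [NormedAddCommGroup E] [InnerProductSpace ℝ E]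

theorem inner_le_of_mem_convexHull {ν : E} {t : ℝ} {s : Set E} (h : ∀ x ∈ s, ⟪ν, x⟫ ≤ t)
    {p : E} (hp : p ∈ convexHull ℝ s) : ⟪ν, p⟫ ≤ t :=
  convexHull_min h (convex_halfSpace_le (innerₛₗ ℝ ν).isLinear t) hp

theorem le_inner_of_mem_convexHull {ν : E} {t : ℝ} {s : Set E} (h : ∀ x ∈ s, t ≤ ⟪ν, x⟫)
    {p : E} (hp : p ∈ convexHull ℝ s) : t ≤ ⟪ν, p⟫ :=
  convexHull_min h (convex_halfSpace_ge (innerₛₗ ℝ ν).isLinear t) hp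

theorem notMem_convexHull_of_inner_lt {ν p : E} {s : Set E} (h : ∀ x ∈ s, ⟪ν, x⟫ < ⟪ν, p⟫) :
    p ∉ convexHull ℝ s := fun hp =>
  lt_irrefl ⟪ν, p⟫ (convexHull_min h (convex_halfSpace_lt (innerₛₗ ℝ ν).isLinear _) hp :)

theorem inner_lt_of_mem_interior {ν : E} (hν : ν ≠ 0) {t : ℝ} {s : Set E}
    (h : ∀ x ∈ s, ⟪ν, x⟫ ≤ t) {p : E} (hp : p ∈ interior s) : ⟪ν, p⟫ < t := by
  have hopen : IsOpenMap (innerSL ℝ ν) := (innerSL ℝ ν).isOpenMap_of_ne_zero <| by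
    rwa [← norm_ne_zero_iff, innerSL_apply_norm, norm_ne_zero_iff]
  have hp' : p ∈ interior (innerSL ℝ ν ⁻¹' Set.Iic t) := interior_mono h hp
  rwa [← hopen.preimage_interior_eq_interior_preimage (innerSL ℝ ν).continuous,
    interior_Iic] at hp'

theorem disjoint_interior_of_separated {ν : E} (hν : ν ≠ 0) {t : ℝ} {s s' : Set E}
    (hs : ∀ x ∈ s, ⟪ν, x⟫ ≤ t) (hs' : ∀ x ∈ s', t ≤ ⟪ν, x⟫) :
    Disjoint (interior s) (interior s') := by
  refine Set.disjoint_left.2 fun p hp hp' => ?_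
  have hneg : ∀ x ∈ s', ⟪-ν, x⟫ ≤ -t := fun x hx => by
    rw [inner_neg_left]; linarith [hs' x hx]
  have h₁ := inner_lt_of_mem_interior hν hs hp
  have h₂ := inner_lt_of_mem_interior (neg_ne_zero.2 hν) hneg hp'
  rw [inner_neg_left] at h₂
  linarith

theorem sub_le_norm_mul_dist {ν p r : E} {t₁ t₂ : ℝ} (hp : ⟪ν, p⟫ ≤ t₁) (hr : t₂ ≤ ⟪ν, r⟫) :
    t₂ - t₁ ≤ ‖ν‖ * dist p r :=
  calc t₂ - t₁ ≤ ⟪ν, r - p⟫ := by rw [inner_sub_right]; linarith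
    _ ≤ ‖ν‖ * ‖r - p‖ := real_inner_le_norm _ _
    _ = ‖ν‖ * dist p r := by rw [dist_comm, dist_eq_norm]

end Separation

namespace HouseTiling

def lat (x y : ℝ) : Plane := !₂[x * √(55 / 896), y * √(1 / 896)]

@[simp] lemma lat_apply_zero (x y : ℝ) : lat x y 0 = x * √(55 / 896) := rfl
@[simp] lemma lat_apply_one (x y : ℝ) : lat x y 1 = y * √(1 / 896) := rfl

lemma plane_ext {p q : Plane} (h₀ : p 0 = q 0) (h₁ : p 1 = q 1) : p = q := by
  ext i; fin_cases i <;> assumption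

lemma inner_lat (a b x y : ℝ) : ⟪lat a b, lat x y⟫ = (55 * a * x + b * y) / 896 := by
  have h₁ := Real.mul_self_sqrt (show (0 : ℝ) ≤ 55 / 896 by norm_num)
  have h₂ := Real.mul_self_sqrt (show (0 : ℝ) ≤ 1 / 896 by norm_num)
  simp only [PiLp.inner_apply, Fin.sum_univ_two, lat_apply_zero, lat_apply_one,
    RCLike.inner_apply, conj_trivial]
  linear_combination (a * x) * h₁ + (b * y) * h₂

lemma norm_lat_sq (a b : ℝ) : ‖lat a b‖ ^ 2 = (55 * a ^ 2 + b ^ 2) / 896 := by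
  rw [← real_inner_self_eq_norm_sq, inner_lat]; ring

lemma dist_lat (a b x y : ℝ) :
    dist (lat a b) (lat x y) = √((55 * (a - x) ^ 2 + (b - y) ^ 2) / 896) := by
  have : lat a b - lat x y = lat (a - x) (b - y) := plane_ext (by simp; ring) (by simp; ring)
  rw [dist_eq_norm, this, ← norm_lat_sq, Real.sqrt_sq (norm_nonneg _)]

lemma lat_add (a b x y : ℝ) : lat a b + lat x y = lat (a + x) (b + y) :=
  plane_ext (by simp; ring) (by simp; ring)

lemma exists_eq_lat (p : Plane) : ∃ x y, p = lat x y :=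
  ⟨p 0 / √(55 / 896), p 1 / √(1 / 896), plane_ext (by simp) (by simp)⟩

def houseX : Fin 5 → ℝ := ![0, 2, 2, 1, 0]
def houseY : Fin 5 → ℝ := ![0, 0, 26, 29, 26]

def houseVertex (j : Fin 5) : Plane := lat (houseX j) (houseY j)

def house : Set Plane := convexHull ℝ (Set.range houseVertex)

theorem houseVertex_notMem_convexHull (i : Fin 5) :
    houseVertex i ∉ convexHull ℝ (houseVertex '' {j | j ≠ i}) := by
  -- a direction in which `houseVertex i` is the unique highest vertex
  let ν : Fin 5 → Plane := ![lat (-1) (-1), lat 1 (-1), lat 1 1, lat 0 1, lat (-1) 1]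
  refine notMem_convexHull_of_inner_lt (ν := ν i) ?_
  rintro _ ⟨j, hj, rfl⟩
  fin_cases i <;> fin_cases j <;> simp_all [ν, houseVertex, inner_lat, houseX, houseY] <;> norm_num

theorem houseVertex_injective : Function.Injective houseVertex := fun i j hij => by
  by_contra hne
  exact houseVertex_notMem_convexHull i (subset_convexHull ℝ _ ⟨j, Ne.symm hne, hij.symm⟩)

theorem dist_le_one_of_mem_house {p q : Plane} (hp : p ∈ house) (hq : q ∈ house) :
    dist p q ≤ 1 := by
  have hdiam : Metric.diam house ≤ 1 := by
    rw [house, convexHull_diam]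
    refine Metric.diam_le_of_forall_dist_le zero_le_one ?_
    rintro _ ⟨i, rfl⟩ _ ⟨j, rfl⟩
    rw [houseVertex, houseVertex, dist_lat, Real.sqrt_le_one]
    fin_cases i <;> fin_cases j <;> norm_num [houseX, houseY]
  exact (Metric.dist_le_diam_of_mem
    (isBounded_convexHull.2 (Set.finite_range houseVertex).isBounded) hp hq).trans hdiam

lemma lat_mem_house_of_weights {x y : ℝ} (w : Fin 5 → ℝ) (hw₀ : ∀ j, 0 ≤ w j)
    (hw₁ : ∑ j, w j = 1) (hx : ∑ j, w j * houseX j = x) (hy : ∑ j, w j * houseY j = y) :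
    lat x y ∈ house := by
  have hmem := (convex_convexHull ℝ (Set.range houseVertex)).sum_mem (fun j _ => hw₀ j) hw₁
    (fun j _ => subset_convexHull ℝ _ (Set.mem_range_self j))
  have hsum : lat x y = ∑ j, w j • houseVertex j := by
    subst hx hy
    refine plane_ext ?_ ?_ <;> simp [houseVertex, Finset.sum_mul, mul_assoc]
  rwa [hsum]

lemma lat_mem_house {x y : ℝ} (hx₀ : 0 ≤ x) (hx₂ : x ≤ 2) (hy : 0 ≤ y)
    (hl : y ≤ 26 + 3 * x) (hr : y ≤ 32 - 3 * x) : lat x y ∈ house := by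
  rcases le_total y 26 with hwall | hroof
  · -- bilinear weights on the rectangle `[0, 2] × [0, 26]`
    set a := x / 2
    set b := y / 26
    have ha : 0 ≤ a ∧ a ≤ 1 := ⟨by positivity, by simp only [a]; linarith⟩
    have hb : 0 ≤ b ∧ b ≤ 1 := ⟨by positivity, by simp only [b]; linarith⟩
    refine lat_mem_house_of_weights ![(1 - a) * (1 - b), a * (1 - b), a * b, 0, (1 - a) * b]
      ?_ ?_ ?_ ?_
    · intro j
      fin_cases j <;> simp <;> nlinarith
    all_goals simp [Fin.sum_univ_five, houseX, houseY, a, b]; ring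
  · -- barycentric weights on the roof triangle
    set l := (y - 26) / 3
    set u := (3 * x - (y - 26)) / 6
    refine lat_mem_house_of_weights ![0, 0, u, l, 1 - l - u] ?_ ?_ ?_ ?_
    · intro j
      fin_cases j <;> simp [l, u] <;> linarith
    all_goals simp [Fin.sum_univ_five, houseX, houseY, l, u]; ring

def offset (i m : ℤ) : Plane := lat (2 * i + 3 * m) (55 * m)

def halfTurn : Plane ≃ᵃⁱ[ℝ] Plane := AffineIsometryEquiv.pointReflection ℝ (lat (1 / 2) (55 / 2))

def tileMap (i m : ℤ) (b : Bool) : Plane ≃ᵃⁱ[ℝ] Plane :=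
  (if b then halfTurn else AffineIsometryEquiv.refl ℝ Plane).trans
    (AffineIsometryEquiv.constVAdd ℝ Plane (offset i m))

def tile (i m : ℤ) (b : Bool) : Set Plane := tileMap i m b '' house

def cornerX (b : Bool) (j : Fin 5) : ℝ := if b then 1 - houseX j else houseX j
def cornerY (b : Bool) (j : Fin 5) : ℝ := if b then 55 - houseY j else houseY j

lemma tileMap_lat (i m : ℤ) (b : Bool) (x y : ℝ) :
    tileMap i m b (lat x y) =
      lat (2 * i + 3 * m + if b then 1 - x else x) (55 * m + if b then 55 - y else y) := by
  cases b <;> refine plane_ext ?_ ?_ <;>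
    simp [tileMap, halfTurn, offset, AffineIsometryEquiv.pointReflection_apply] <;> ring

def tileCorner (i m : ℤ) (b : Bool) (j : Fin 5) : Plane :=
  lat (2 * i + 3 * m + cornerX b j) (55 * m + cornerY b j)

lemma tile_eq_convexHull (i m : ℤ) (b : Bool) :
    tile i m b = convexHull ℝ (Set.range (tileCorner i m b)) := by
  have hcorner : tileMap i m b ∘ houseVertex = tileCorner i m b := by
    ext1 j
    cases b <;> simp [houseVertex, tileMap_lat, tileCorner, cornerX, cornerY]
  rw [tile, house, ← hcorner, Set.range_comp]
  exact AffineMap.image_convexHull (tileMap i m b).toAffineEquiv.toAffineMap _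

lemma offset_add (i m i' m' : ℤ) : offset (i + i') (m + m') = offset i m + offset i' m' := by
  rw [offset, offset, offset, lat_add]; push_cast; ring_nf

lemma tile_add (i m i' m' : ℤ) (b : Bool) :
    tile (i + i') (m + m') b = offset i m +ᵥ tile i' m' b := by
  have hmap : ⇑(tileMap (i + i') (m + m') b) = (offset i m +ᵥ ·) ∘ tileMap i' m' b := by
    ext1 p
    simp [tileMap, offset_add, add_assoc]
  rw [tile, tile, hmap, Set.image_comp, Set.image_vadd]

lemma lat_mem_tile_false {i m : ℤ} {x y : ℝ} (h : lat (x - 2 * i - 3 * m) (y - 55 * m) ∈ house) :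
    lat x y ∈ tile i m false :=
  ⟨_, h, by rw [tileMap_lat]; congr 1 <;> simp⟩

lemma lat_mem_tile_true {i m : ℤ} {x y : ℝ}
    (h : lat (2 * i + 3 * m + 1 - x) (55 * m + 55 - y) ∈ house) : lat x y ∈ tile i m true :=
  ⟨_, h, by rw [tileMap_lat]; congr 1 <;> simp only [if_true] <;> ring⟩

/-- `[0, 2) × [0, 55)` is a fundamental domain of the period lattice; it is covered by the
house and the half-turned houses with offsets `0` and `(2, 0)`. -/
lemma lat_mem_house_or_of_mem_cell {x y : ℝ} (hx₀ : 0 ≤ x) (hx₂ : x < 2) (hy₀ : 0 ≤ y)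
    (hy : y < 55) :
    lat x y ∈ house ∨ lat (1 - x) (55 - y) ∈ house ∨ lat (3 - x) (55 - y) ∈ house := by
  by_cases hup : y ≤ 26 + 3 * x ∧ y ≤ 32 - 3 * x
  · exact Or.inl (lat_mem_house hx₀ hx₂.le hy₀ hup.1 hup.2)
  rw [not_and_or, not_le, not_le] at hup
  rcases le_or_gt x 1 with hx₁ | hx₁
  · refine Or.inr (Or.inl (lat_mem_house ?_ ?_ ?_ ?_ ?_)) <;> rcases hup with h | h <;> linarith
  · refine Or.inr (Or.inr (lat_mem_house ?_ ?_ ?_ ?_ ?_)) <;> rcases hup with h | h <;> linarith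

theorem exists_mem_tile (p : Plane) : ∃ i m b, p ∈ tile i m b := by
  obtain ⟨x, y, rfl⟩ := exists_eq_lat p
  set m := ⌊y / 55⌋
  set i := ⌊(x - 3 * m) / 2⌋
  have hy₀ := Int.sub_floor_div_mul_nonneg y (by norm_num : (0 : ℝ) < 55)
  have hy := Int.sub_floor_div_mul_lt y (by norm_num : (0 : ℝ) < 55)
  have hx₀ := Int.sub_floor_div_mul_nonneg (x - 3 * m) two_pos
  have hx := Int.sub_floor_div_mul_lt (x - 3 * m) two_pos
  rcases lat_mem_house_or_of_mem_cell hx₀ hx hy₀ hy with h | h | h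
  · exact ⟨i, m, false, lat_mem_tile_false (by convert h using 2 <;> ring)⟩
  · exact ⟨i, m, true, lat_mem_tile_true (by convert h using 2 <;> ring)⟩
  · exact ⟨i + 1, m, true, lat_mem_tile_true (by convert h using 2 <;> push_cast <;> ring)⟩

lemma inner_le_of_mem_tile {i m : ℤ} {b : Bool} {A B t : ℝ}
    (h : ∀ j, 55 * A * (2 * i + 3 * m + cornerX b j) + B * (55 * m + cornerY b j) ≤ t)
    {p : Plane} (hp : p ∈ tile i m b) : ⟪lat A B, p⟫ ≤ t / 896 := by
  rw [tile_eq_convexHull] at hp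
  refine inner_le_of_mem_convexHull ?_ hp
  rintro _ ⟨j, rfl⟩
  rw [tileCorner, inner_lat]
  exact div_le_div_of_nonneg_right (h j) (by norm_num)

lemma le_inner_of_mem_tile {i m : ℤ} {b : Bool} {A B t : ℝ}
    (h : ∀ j, t ≤ 55 * A * (2 * i + 3 * m + cornerX b j) + B * (55 * m + cornerY b j))
    {p : Plane} (hp : p ∈ tile i m b) : t / 896 ≤ ⟪lat A B, p⟫ := by
  rw [tile_eq_convexHull] at hp
  refine le_inner_of_mem_convexHull ?_ hp
  rintro _ ⟨j, rfl⟩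
  rw [tileCorner, inner_lat]
  exact div_le_div_of_nonneg_right (h j) (by norm_num)

lemma lat_ne_zero {A B : ℝ} (hAB : 0 < 55 * A ^ 2 + B ^ 2) : lat A B ≠ 0 := fun h => by
  have := norm_lat_sq A B
  rw [h, norm_zero] at this
  linarith

lemma disjoint_interior_tile_of_separated {i m i' m' : ℤ} {b b' : Bool} {A B t : ℝ}
    (hAB : 0 < 55 * A ^ 2 + B ^ 2)
    (h : ∀ j, 55 * A * (2 * i + 3 * m + cornerX b j) + B * (55 * m + cornerY b j) ≤ t)
    (h' : ∀ j, t ≤ 55 * A * (2 * i' + 3 * m' + cornerX b' j) + B * (55 * m' + cornerY b' j)) :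
    Disjoint (interior (tile i m b)) (interior (tile i' m' b')) :=
  disjoint_interior_of_separated (lat_ne_zero hAB) (fun _ => inner_le_of_mem_tile h)
    (fun _ => le_inner_of_mem_tile h')

def FarApart (S S' : Set Plane) : Prop := ∀ p ∈ S, ∀ q ∈ S', √(55 / 56) ≤ dist p q

lemma FarApart.symm {S S' : Set Plane} (h : FarApart S S') : FarApart S' S :=
  fun p hp q hq => dist_comm p q ▸ h q hq p hp

lemma farApart_tile_of_separated {i m i' m' : ℤ} {b b' : Bool} {A B t₁ t₂ : ℝ}
    (hAB : 0 < 55 * A ^ 2 + B ^ 2) (ht : t₁ ≤ t₂)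
    (hgap : 880 * (55 * A ^ 2 + B ^ 2) ≤ (t₂ - t₁) ^ 2)
    (h : ∀ j, 55 * A * (2 * i + 3 * m + cornerX b j) + B * (55 * m + cornerY b j) ≤ t₁)
    (h' : ∀ j, t₂ ≤ 55 * A * (2 * i' + 3 * m' + cornerX b' j) + B * (55 * m' + cornerY b' j)) :
    FarApart (tile i m b) (tile i' m' b') := by
  intro p hp q hq
  have hsep := sub_le_norm_mul_dist (inner_le_of_mem_tile h hp) (le_inner_of_mem_tile h' hq)
  have hsq : ((t₂ - t₁) / 896) ^ 2 ≤ ‖lat A B‖ ^ 2 * dist p q ^ 2 := by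
    rw [← mul_pow]; exact pow_le_pow_left₀ (by linarith) (by linarith) 2
  rw [norm_lat_sq] at hsq
  rw [Real.sqrt_le_left dist_nonneg]
  -- `880 = 896 * (55 / 56)`
  have key : 55 / 56 * (55 * A ^ 2 + B ^ 2) ≤ dist p q ^ 2 * (55 * A ^ 2 + B ^ 2) := by
    nlinarith
  exact le_of_mul_le_mul_right key hAB

lemma farApart_tile_translate {i m i' m' : ℤ} {b b' : Bool}
    (h : FarApart (tile i m b) (tile i' m' b')) (k n : ℤ) :
    FarApart (tile (k + i) (n + m) b) (tile (k + i') (n + m') b') := by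
  rw [tile_add, tile_add]
  rintro _ ⟨p, hp, rfl⟩ _ ⟨q, hq, rfl⟩
  rw [dist_vadd_cancel_left]
  exact h p hp q hq

lemma disjoint_interior_tile_translate {i m i' m' : ℤ} {b b' : Bool}
    (h : Disjoint (interior (tile i m b)) (interior (tile i' m' b'))) (k n : ℤ) :
    Disjoint (interior (tile (k + i) (n + m) b)) (interior (tile (k + i') (n + m') b')) := by
  rwa [tile_add, tile_add, interior_vadd, interior_vadd, Set.disjoint_vadd_set]

lemma disjoint_interior_tile_zero_of_pos {b b' : Bool} {i m : ℤ}
    (h : 1 ≤ m ∨ m = 0 ∧ (b = b' ∧ 1 ≤ i ∨ b = false ∧ b' = true)) :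
    Disjoint (interior (tile 0 0 b)) (interior (tile i m b')) := by
  rcases h with hm | ⟨rfl, ⟨rfl, hi⟩ | ⟨rfl, rfl⟩⟩
  · have hm' : (1 : ℝ) ≤ m := by exact_mod_cast hm
    refine disjoint_interior_tile_of_separated (A := 0) (B := 1) (t := 55) (by norm_num) ?_ ?_ <;>
      intro j <;> cases b <;> cases b' <;> fin_cases j <;>
      simp [cornerX, cornerY, houseX, houseY] <;> linarith
  · have hi' : (1 : ℝ) ≤ i := by exact_mod_cast hi
    refine disjoint_interior_tile_of_separated (A := 1) (B := 0) (t := if b then 55 else 110)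
      (by norm_num) ?_ ?_ <;>
      intro j <;> cases b <;> fin_cases j <;> simp [cornerX, cornerY, houseX, houseY] <;> linarith
  · rcases le_or_gt i 0 with hi | hi
    · have hi' : (i : ℝ) ≤ 0 := by exact_mod_cast hi
      refine disjoint_interior_tile_of_separated (A := -3) (B := 55) (t := 1430)
        (by norm_num) ?_ ?_ <;>
        intro j <;> fin_cases j <;> simp [cornerX, cornerY, houseX, houseY] <;> linarith
    · have hi' : (1 : ℝ) ≤ i := by exact_mod_cast hi
      refine disjoint_interior_tile_of_separated (A := 3) (B := 55) (t := 1760)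
        (by norm_num) ?_ ?_ <;>
        intro j <;> fin_cases j <;> simp [cornerX, cornerY, houseX, houseY] <;> linarith

lemma disjoint_interior_tile_zero {b b' : Bool} {i m : ℤ} (h : (i, m, b') ≠ (0, 0, b)) :
    Disjoint (interior (tile 0 0 b)) (interior (tile i m b')) := by
  by_cases hpos : 1 ≤ m ∨ m = 0 ∧ (b = b' ∧ 1 ≤ i ∨ b = false ∧ b' = true)
  · exact disjoint_interior_tile_zero_of_pos hpos
  have hrev : 1 ≤ -m ∨ -m = 0 ∧ (b' = b ∧ 1 ≤ -i ∨ b' = false ∧ b = true) := by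
    cases b <;> cases b' <;> simp at h hpos ⊢ <;> omega
  simpa using (disjoint_interior_tile_translate (disjoint_interior_tile_zero_of_pos hrev) i m).symm

theorem pairwise_disjoint_interior_tile :
    Pairwise fun z z' : ℤ × ℤ × Bool =>
      Disjoint (interior (tile z.1 z.2.1 z.2.2)) (interior (tile z'.1 z'.2.1 z'.2.2)) := by
  rintro ⟨i, m, b⟩ ⟨i', m', b'⟩ hne
  have hne' : (i' - i, m' - m, b') ≠ (0, 0, b) := fun h => hne <| by
    simp only [Prod.mk.injEq] at h ⊢
    exact ⟨by omega, by omega, h.2.2.symm⟩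
  simpa using disjoint_interior_tile_translate (disjoint_interior_tile_zero hne') i m

lemma farApart_tile_zero_of_pos {b : Bool} {k n : ℤ} (h : 1 ≤ n ∨ n = 0 ∧ 1 ≤ k) :
    FarApart (tile 0 0 b) (tile (3 * k) n b) := by
  have hcases : 2 ≤ n ∨ (0 ≤ n ∧ n ≤ 1 ∧ 1 ≤ k) ∨ (n = 1 ∧ k = 0) ∨ (n = 1 ∧ k = -1) ∨
      (n = 1 ∧ k ≤ -2) := by omega
  rcases hcases with hn | ⟨hn₀, hn₁, hk⟩ | ⟨rfl, rfl⟩ | ⟨rfl, rfl⟩ | ⟨rfl, hk⟩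
  · have hn' : (2 : ℝ) ≤ n := by exact_mod_cast hn
    refine farApart_tile_of_separated (A := 0) (B := 1) (t₁ := if b then 55 else 29)
      (t₂ := (if b then 55 else 29) + 81) (by norm_num) (by linarith) (by norm_num) ?_ ?_ <;>
      intro j <;> cases b <;> fin_cases j <;> simp [cornerX, cornerY, houseX, houseY] <;> linarith
  · have hn₀' : (0 : ℝ) ≤ n := by exact_mod_cast hn₀
    have hk' : (1 : ℝ) ≤ k := by exact_mod_cast hk
    refine farApart_tile_of_separated (A := 1) (B := 0) (t₁ := if b then 55 else 110)
      (t₂ := (if b then 55 else 110) + 220) (by norm_num) (by linarith) (by norm_num) ?_ ?_ <;>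
      intro j <;> cases b <;> fin_cases j <;> simp [cornerX, cornerY, houseX, houseY] <;> linarith
  · refine farApart_tile_of_separated (A := 3) (B := 55) (t₁ := if b then 3190 else 1760)
      (t₂ := (if b then 3190 else 1760) + 1760) (by norm_num) (by linarith) (by norm_num) ?_ ?_ <;>
      intro j <;> cases b <;> fin_cases j <;> simp [cornerX, cornerY, houseX, houseY] <;> norm_num
  · refine farApart_tile_of_separated (A := -3) (B := 55) (t₁ := if b then 3190 else 1430)
      (t₂ := (if b then 3190 else 1430) + 1760) (by norm_num) (by linarith) (by norm_num) ?_ ?_ <;>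
      intro j <;> cases b <;> fin_cases j <;> simp [cornerX, cornerY, houseX, houseY] <;> norm_num
  · have hk' : (k : ℝ) ≤ -2 := by exact_mod_cast hk
    refine farApart_tile_of_separated (A := -1) (B := 0) (t₁ := if b then 55 else 0)
      (t₂ := (if b then 55 else 0) + 220) (by norm_num) (by linarith) (by norm_num) ?_ ?_ <;>
      intro j <;> cases b <;> fin_cases j <;> simp [cornerX, cornerY, houseX, houseY] <;> linarith

lemma farApart_tile_zero {b : Bool} {k n : ℤ} (h : (k, n) ≠ (0, 0)) :
    FarApart (tile 0 0 b) (tile (3 * k) n b) := by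
  by_cases hpos : 1 ≤ n ∨ n = 0 ∧ 1 ≤ k
  · exact farApart_tile_zero_of_pos hpos
  have hrev : 1 ≤ -n ∨ -n = 0 ∧ 1 ≤ -k := by
    simp only [ne_eq, Prod.mk.injEq] at h
    omega
  simpa using (farApart_tile_translate (farApart_tile_zero_of_pos hrev) (3 * k) n).symm

def colour (i : ℤ) (b : Bool) : Fin 6 := finProdFinEquiv ((i : ZMod 3), finTwoEquiv.symm b)

lemma colour_eq_colour {i i' : ℤ} {b b' : Bool} (h : colour i b = colour i' b') :
    b = b' ∧ ∃ k, i' = i + 3 * k := by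
  obtain ⟨hi, hb⟩ := Prod.mk.inj (finProdFinEquiv.injective h)
  refine ⟨finTwoEquiv.symm.injective hb, ?_⟩
  obtain ⟨k, hk⟩ := (ZMod.intCast_eq_intCast_iff_dvd_sub i i' 3).1 hi
  exact ⟨k, by push_cast at hk; omega⟩

theorem farApart_tile_of_colour_eq {z z' : ℤ × ℤ × Bool} (hne : z ≠ z')
    (hcol : colour z.1 z.2.2 = colour z'.1 z'.2.2) :
    FarApart (tile z.1 z.2.1 z.2.2) (tile z'.1 z'.2.1 z'.2.2) := by
  obtain ⟨i, m, b⟩ := z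
  obtain ⟨i', m', b'⟩ := z'
  obtain ⟨rfl, k, rfl⟩ := colour_eq_colour hcol
  have hkn : (k, m' - m) ≠ (0, 0) := fun h => hne <| by
    simp only [Prod.mk.injEq, and_true] at h ⊢
    omega
  simpa using farApart_tile_translate (farApart_tile_zero (b := b) hkn) i m

end HouseTiling

open HouseTiling in
/-- There exist a closed convex pentagon H ⊂ ℝ² of Euclidean diameter at
most 1 (the convex hull of 5 points, each of which is a genuine vertex), a countable
family of isometric copies of H tiling the plane (their union is ℝ² and their interiors
are pairwise disjoint), and a 6-colouring of the tiles such that any two distinct tiles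
of the same colour are at distance at least Real.sqrt (55 / 56) from each other. -/
theorem statement19 :
    ∃ (H : Set Plane) (v : Fin 5 → Plane),
      Function.Injective v ∧
      (∀ i : Fin 5, v i ∉ convexHull ℝ (v '' {j : Fin 5 | j ≠ i})) ∧
      H = convexHull ℝ (Set.range v) ∧
      (∀ p ∈ H, ∀ q ∈ H, dist p q ≤ 1) ∧
      ∃ (T : ℕ → Set Plane) (col : ℕ → Fin 6),
        (∀ n : ℕ, ∃ f : Plane ≃ᵢ Plane, T n = f '' H) ∧
        (⋃ n : ℕ, T n) = Set.univ ∧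
        (∀ n m : ℕ, n ≠ m → interior (T n) ∩ interior (T m) = ∅) ∧
        (∀ n m : ℕ, n ≠ m → col n = col m →
          ∀ p ∈ T n, ∀ q ∈ T m, (Real.sqrt (55 / 56) : ℝ) ≤ dist p q) := by
  obtain ⟨e⟩ : Nonempty (ℕ ≃ ℤ × ℤ × Bool) := inferInstance
  refine ⟨house, houseVertex, houseVertex_injective, houseVertex_notMem_convexHull, rfl,
    fun p hp q hq => dist_le_one_of_mem_house hp hq, fun n => tile (e n).1 (e n).2.1 (e n).2.2,
    fun n => colour (e n).1 (e n).2.2, fun n => ⟨(tileMap _ _ _).toIsometryEquiv, rfl⟩,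
    ?_, ?_, ?_⟩
  · refine Set.eq_univ_of_forall fun p => ?_
    obtain ⟨i, m, b, hp⟩ := exists_mem_tile p
    exact Set.mem_iUnion.2 ⟨e.symm (i, m, b), by simpa using hp⟩
  · exact fun n n' hne =>
      Set.disjoint_iff_inter_eq_empty.1 (pairwise_disjoint_interior_tile (e.injective.ne hne))
  · exact fun n n' hne hcol => farApart_tile_of_colour_eq (e.injective.ne hne) hcol
end
end
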